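/- arXiv:2308.11826 — 4 statements merged into one kernel-verified Lean document; each statement's English description precedes it below -/
import Mathlib

section
/- Let κ be an infinite well-ordered cardinal (a Cardinal in the well-ordered sense). The following are equivalent: (i) for every sequence X₁, X₂, … of sets (subsets of an arbitrary ambient type) such that the cardinality of Xₙ is strictly less than κ for every n, the union ⋃ₙ Xₙ has cardinality at most κ; (ii) for every metric space Y with the property that for every ε > 0 there exists a subset F ⊆ Y of cardinality strictly less than κ with Y = ⋃_{x ∈ F} B(x, ε), every family of pairwise disjoint nonempty open subsets of Y has cardinality at most κ. -/
/-!
(i) ⇒ (ii): sort the members of a disjoint open family by the radius `1 / (n + 1)` of a ball they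
contain; by disjointness the `n`-th class injects into a `1 / (n + 1)`-net, so it has fewer than
`κ` members, and the family is a countable union of such classes.

(ii) ⇒ (i): give each point `x` of `⋃ n, X n` a level `ℓ x` with `x ∈ X (ℓ x)` and the ultrametric
`dist x y = max (1 / (ℓ x + 1)) (1 / (ℓ y + 1))` for `x ≠ y`. The space is discrete, and since all
points of level above `N` are `1 / (N + 1)`-close to each other, it has nets of fewer than `κ`
points. The singletons then form a disjoint open family, of cardinality `#(⋃ n, X n)`.
-/

open Cardinal Set Metric

universe u

theorem Cardinal.mk_biUnion_finset_lt {ι : Type*} {α : Type u} {κ : Cardinal.{u}} (hκ : ℵ₀ ≤ κ)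
    (s : Finset ι) (X : ι → Set α) (hX : ∀ i ∈ s, #(X i) < κ) : #(⋃ i ∈ s, X i) < κ := by
  classical
  induction s using Finset.induction_on with
  | empty => simpa using lt_of_lt_of_le aleph0_pos hκ
  | insert i s _ ih =>
    rw [Finset.set_biUnion_insert]
    exact (mk_union_le _ _).trans_lt <| add_lt_of_lt hκ (hX i (s.mem_insert_self i))
      (ih fun j hj => hX j (Finset.mem_insert_of_mem hj))

theorem Set.Pairwise.mk_le_of_forall_inter_nonempty {β : Type u} {𝒞 : Set (Set β)}
    (h𝒞 : 𝒞.Pairwise Disjoint) {F : Set β} (hF : ∀ U ∈ 𝒞, (U ∩ F).Nonempty) : #𝒞 ≤ #F := by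
  choose x hxU hxF using hF
  refine mk_le_of_injective (f := fun U : 𝒞 => (⟨x U U.2, hxF U U.2⟩ : F)) ?_
  rintro ⟨U, hU⟩ ⟨V, hV⟩ hUV
  have hx : x U hU = x V hV := congrArg Subtype.val hUV
  exact Subtype.ext <| h𝒞.eq hU hV <| not_disjoint_iff.2 ⟨_, hxU U hU, hx ▸ hxU V hV⟩

theorem Metric.inter_nonempty_of_ball_subset {Y : Type*} [PseudoMetricSpace Y] {F U : Set Y}
    {ε : ℝ} (hF : ⋃ x ∈ F, ball x ε = Set.univ) {y : Y} (hy : ball y ε ⊆ U) : (U ∩ F).Nonempty := by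
  obtain ⟨x, hxF, hyx⟩ := mem_iUnion₂.1 (hF ▸ mem_univ y)
  exact ⟨x, hy (mem_ball_comm.1 hyx), hxF⟩

theorem Metric.exists_nat_ball_subset {Y : Type*} [PseudoMetricSpace Y] {U : Set Y}
    (hU : IsOpen U) (hne : U.Nonempty) : ∃ (n : ℕ) (y : Y), ball y (1 / ((n : ℝ) + 1)) ⊆ U := by
  obtain ⟨y, hy⟩ := hne
  obtain ⟨ε, hε, hball⟩ := isOpen_iff.1 hU y hy
  obtain ⟨n, hn⟩ := exists_nat_one_div_lt hε
  exact ⟨n, y, (ball_subset_ball hn.le).trans hball⟩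

theorem mk_le_of_pairwise_disjoint_isOpen {Y : Type u} [PseudoMetricSpace Y] {κ : Cardinal.{u}}
    (hunion : ∀ X : ℕ → Set (Set Y), (∀ n, #(X n) < κ) → #(⋃ n, X n) ≤ κ)
    (hnet : ∀ ε : ℝ, 0 < ε → ∃ F : Set Y, #F < κ ∧ (⋃ x ∈ F, ball x ε) = Set.univ)
    {𝒞 : Set (Set Y)} (hopen : ∀ U ∈ 𝒞, IsOpen U ∧ U.Nonempty) (h𝒞 : 𝒞.Pairwise Disjoint) :
    #𝒞 ≤ κ := by
  let C : ℕ → Set (Set Y) := fun n => {U ∈ 𝒞 | ∃ y, ball y (1 / ((n : ℝ) + 1)) ⊆ U}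
  have hcover : 𝒞 = ⋃ n, C n := by
    ext U
    simp only [C, mem_iUnion, mem_ofPred_eq]
    refine ⟨fun hU => ?_, fun ⟨_, hU, _⟩ => hU⟩
    obtain ⟨n, hn⟩ := exists_nat_ball_subset (hopen U hU).1 (hopen U hU).2
    exact ⟨n, hU, hn⟩
  rw [hcover]
  refine hunion C fun n => ?_
  obtain ⟨F, hFκ, hF⟩ := hnet _ (Nat.one_div_pos_of_nat (n := n))
  refine lt_of_le_of_lt ((h𝒞.mono fun _ hU => hU.1).mk_le_of_forall_inter_nonempty ?_) hFκ
  rintro U ⟨-, y, hy⟩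
  exact inter_nonempty_of_ball_subset hF hy

def LevelSpace {β : Type*} (_ℓ : β → ℕ) : Type _ := β

namespace LevelSpace

variable {β : Type u} (ℓ : β → ℕ)

open Classical in
noncomputable instance : MetricSpace (LevelSpace ℓ) where
  dist a b := if a = b then 0 else max (1 / ((ℓ a : ℝ) + 1)) (1 / ((ℓ b : ℝ) + 1))
  dist_self a := if_pos rfl
  dist_comm a b := by
    by_cases h : a = b
    · simp [h]
    · simp only [if_neg h, if_neg (Ne.symm h), max_comm]
  dist_triangle a b c := by
    by_cases hab : a = b
    · simp [hab]
    by_cases hbc : b = c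
    · simp [hbc]
    rw [if_neg hab, if_neg hbc]
    split_ifs
    · positivity
    · exact max_le (le_add_of_le_of_nonneg (le_max_left _ _) (by positivity))
        (le_add_of_nonneg_of_le (by positivity) (le_max_right _ _))
  eq_of_dist_eq_zero {a b} h := by
    by_contra hab
    simp only [if_neg hab] at h
    exact (lt_max_of_lt_left (Nat.one_div_pos_of_nat (n := ℓ a))).ne' h

variable {ℓ}

theorem dist_eq_of_ne {a b : LevelSpace ℓ} (h : a ≠ b) :
    dist a b = max (1 / ((ℓ a : ℝ) + 1)) (1 / ((ℓ b : ℝ) + 1)) :=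
  if_neg h

theorem ball_eq_singleton (a : LevelSpace ℓ) : ball a (1 / ((ℓ a : ℝ) + 1)) = {a} := by
  refine Subset.antisymm (fun b hb => ?_)
    (singleton_subset_iff.2 (mem_ball_self Nat.one_div_pos_of_nat))
  by_contra hba
  exact (mem_ball.1 hb).not_ge (dist_eq_of_ne hba ▸ le_max_right _ _)

instance : DiscreteTopology (LevelSpace ℓ) :=
  discreteTopology_iff_isOpen_singleton.2 fun a => ball_eq_singleton a ▸ isOpen_ball

theorem dist_lt_of_lt_level {N : ℕ} {a b : LevelSpace ℓ} (ha : N < ℓ a) (hb : N < ℓ b) :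
    dist a b < 1 / ((N : ℝ) + 1) := by
  have hlt {n : ℕ} (h : N < n) : 1 / ((n : ℝ) + 1) < 1 / ((N : ℝ) + 1) :=
    Nat.one_div_lt_one_div h
  by_cases hab : a = b
  · rw [hab, dist_self]
    exact Nat.one_div_pos_of_nat
  · exact dist_eq_of_ne hab ▸ max_lt (hlt ha) (hlt hb)

theorem exists_mk_lt_iUnion_ball_eq_univ {κ : Cardinal.{u}} (hκ : ℵ₀ ≤ κ)
    {N : ℕ} (hN : #{a | ℓ a ≤ N} < κ) {ε : ℝ} (hε : 1 / ((N : ℝ) + 1) < ε) :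
    ∃ F : Set (LevelSpace ℓ), #F < κ ∧ ⋃ x ∈ F, ball x ε = Set.univ := by
  have hε₀ : 0 < ε := lt_trans Nat.one_div_pos_of_nat hε
  by_cases hhigh : ∃ a₀ : LevelSpace ℓ, N < ℓ a₀
  · obtain ⟨a₀, ha₀⟩ := hhigh
    refine ⟨insert a₀ {a | ℓ a ≤ N}, mk_insert_le.trans_lt (add_lt_of_lt hκ hN
      (one_lt_aleph0.trans_le hκ)), eq_univ_of_forall fun b => mem_iUnion₂.2 ?_⟩
    rcases le_or_gt (ℓ b) N with hb | hb
    · exact ⟨b, mem_insert_of_mem _ hb, mem_ball_self hε₀⟩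
    · exact ⟨a₀, mem_insert _ _, (dist_lt_of_lt_level hb ha₀).trans hε⟩
  · simp only [not_exists, not_lt] at hhigh
    exact ⟨{a | ℓ a ≤ N}, hN,
      eq_univ_of_forall fun b => mem_iUnion₂.2 ⟨b, hhigh b, mem_ball_self hε₀⟩⟩

end LevelSpace

/-- Theorem 2.2 (t7): for an infinite well-ordered cardinal `κ`, the assertion that
countable unions of sets of size `< κ` have size `≤ κ` is equivalent to the assertion
that every metric space coverable, for each `ε > 0`, by fewer than `κ` open `ε`-balls
satisfies the `κ≤`-chain condition. -/
theorem countable_union_le_iff_metric_chain_condition (κ : Cardinal.{u}) (hκ : ℵ₀ ≤ κ) :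
    (∀ (α : Type u) (X : ℕ → Set α), (∀ n, #(X n) < κ) → #(⋃ n, X n) ≤ κ) ↔
    (∀ (Y : Type u) [MetricSpace Y],
      (∀ ε : ℝ, 0 < ε → ∃ F : Set Y, #F < κ ∧ (⋃ x ∈ F, Metric.ball x ε) = Set.univ) →
      ∀ 𝒞 : Set (Set Y), (∀ U ∈ 𝒞, IsOpen U ∧ U.Nonempty) →
        𝒞.Pairwise Disjoint → #𝒞 ≤ κ) := by
  refine ⟨fun hunion Y _ hnet 𝒞 hopen h𝒞 =>
    mk_le_of_pairwise_disjoint_isOpen (hunion (Set Y)) hnet hopen h𝒞, fun hchain α X hX => ?_⟩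
  choose level hlevel using fun y : ↥(⋃ n, X n) => mem_iUnion.1 y.2
  have hsmall (N : ℕ) : #{y | level y ≤ N} < κ := by
    refine lt_of_le_of_lt ?_ (mk_biUnion_finset_lt hκ (Finset.range (N + 1)) X fun n _ => hX n)
    rw [← mk_image_eq Subtype.val_injective]
    refine mk_le_mk_of_subset ?_
    rintro _ ⟨y, hy, rfl⟩
    exact mem_biUnion (Finset.mem_range_succ_iff.2 hy) (hlevel y)
  have hnet (ε : ℝ) (hε : 0 < ε) :
      ∃ F : Set (LevelSpace level), #F < κ ∧ ⋃ x ∈ F, ball x ε = Set.univ :=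
    let ⟨N, hN⟩ := exists_nat_one_div_lt hε
    LevelSpace.exists_mk_lt_iUnion_ball_eq_univ hκ (hsmall N) hN
  have hsingletons := hchain (LevelSpace level) hnet (range singleton)
    (by rintro _ ⟨a, rfl⟩; exact ⟨isOpen_discrete _, singleton_nonempty a⟩)
    pairwiseDisjoint_range_singleton
  rwa [mk_range_eq _ singleton_injective] at hsingletons
end

section
/- Let κ be a cardinal with uncountable cofinality, meaning that a set of cardinality κ cannot be covered by countably many sets each of cardinality strictly less than κ. Let ι be an index type and let (P i)_{i ∈ ι} be a family of partial orders, each satisfying the σ^κ-chain condition. Suppose that for every sequence X₁, X₂, … of pairwise disjoint nonempty sets (subsets of an arbitrary ambient type) with |Xₙ| < κ for all n, there exist an index i and an injection f : ⋃ₙ Xₙ → P i whose range is an antichain in P i. Then the following are equivalent: (a) for every i, every antichain in P i has cardinality strictly less than κ; (b) for every sequence X₁, X₂, … of sets with |Xₙ| < κ for all n, the union ⋃ₙ Xₙ has cardinality strictly less than κ. -/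
open Cardinal Set

universe u

/-- Two elements of a partial order are incompatible if every common lower bound of
them is a lower bound of all of `P`. -/
def Incompat {P : Type u} [PartialOrder P] (x y : P) : Prop :=
  ∀ z : P, z ≤ x → z ≤ y → ∀ w : P, z ≤ w

/-- An antichain is a set of pairwise incompatible elements. -/
def IsPosetAntichain {P : Type u} [PartialOrder P] (A : Set P) : Prop :=
  A.Pairwise Incompat

/-- A poset satisfies the `σ^κ`-chain condition if it is a countable union of subsets
in which every antichain has cardinality `< κ`. -/
def SigmaKappaCC (κ : Cardinal.{u}) (P : Type u) [PartialOrder P] : Prop :=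
  ∃ Q : ℕ → Set P, (⋃ n, Q n) = Set.univ ∧
    ∀ n, ∀ A : Set P, A ⊆ Q n → IsPosetAntichain A → #A < κ

/-!
Forward direction: pad the `n`-th set with one extra point and tag it with `n`; this makes the
pieces pairwise disjoint and nonempty without leaving the class of sets of size `< κ` (as soon as
`κ` is infinite), so the hypothesis embeds their union as an antichain, which has size `< κ`.
The uncountable cofinality of `κ` rules out `1 < κ ≤ ℵ₀`, the one case where this padding fails.
Backward direction: an antichain is the countable union of its traces on the `κ`-cc pieces.
-/

theorem le_one_or_aleph0_lt_of_forall_not_subset_iUnion {κ : Cardinal.{u}}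
    (hκ : ∀ (β : Type u) (S : Set β) (C : ℕ → Set β),
      #S = κ → (∀ n, #(C n) < κ) → ¬ S ⊆ ⋃ n, C n) :
    κ ≤ 1 ∨ ℵ₀ < κ := by
  by_contra! h
  obtain ⟨h1, hℵ₀⟩ := h
  have : Nonempty κ.out := mk_ne_zero_iff.mp (by rw [mk_out]; exact (zero_lt_one.trans h1).ne')
  have : Countable κ.out := mk_le_aleph0_iff.mp (by rwa [mk_out])
  obtain ⟨g, hg⟩ := exists_surjective_nat κ.out
  refine hκ κ.out Set.univ (fun n => {g n}) (by rw [mk_univ, mk_out]) (fun n => by simpa using h1) ?_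
  intro x _
  obtain ⟨n, rfl⟩ := hg x
  exact mem_iUnion_of_mem n rfl

theorem mk_iUnion_lt_of_le_one {κ : Cardinal.{u}} {α : Type u} {X : ℕ → Set α} (hκ : κ ≤ 1)
    (hX : ∀ n, #(X n) < κ) : #(⋃ n, X n) < κ := by
  have hempty : ∀ n, X n = ∅ := fun n =>
    mk_set_eq_zero_iff.mp (Cardinal.lt_one_iff.mp ((hX n).trans_le hκ))
  simpa [hempty] using hX 0

section DisjointPadding

variable {α : Type u}

def disjointPadding (X : ℕ → Set α) (n : ℕ) : Set (Option α × ℕ) :=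
  insert none (some '' X n) ×ˢ {n}

theorem pairwise_disjoint_disjointPadding (X : ℕ → Set α) :
    Pairwise (Function.onFun Disjoint (disjointPadding X)) := fun _ _ hmn =>
  disjoint_prod.mpr (Or.inr (disjoint_singleton.mpr hmn))

theorem nonempty_disjointPadding (X : ℕ → Set α) (n : ℕ) : (disjointPadding X n).Nonempty :=
  (insert_nonempty _ _).prod (singleton_nonempty n)

theorem mk_disjointPadding_lt {κ : Cardinal.{u}} (hκ : ℵ₀ ≤ κ) {X : ℕ → Set α} {n : ℕ}
    (hX : #(X n) < κ) : #(disjointPadding X n) < κ := by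
  calc #(disjointPadding X n) = #(insert none (some '' X n) : Set (Option α)) := by
        rw [disjointPadding, prod_singleton, mk_image_eq (Prod.mk_left_injective n)]
    _ ≤ #(X n) + 1 := by
        rw [← mk_image_eq (Option.some_injective α) (s := X n)]
        exact mk_insert_le
    _ < κ := add_lt_of_lt hκ hX (one_lt_aleph0.trans_le hκ)

theorem mk_iUnion_le_mk_iUnion_disjointPadding (X : ℕ → Set α) :
    #(⋃ n, X n) ≤ #(⋃ n, disjointPadding X n) := by
  have hsub : some '' ⋃ n, X n ⊆ Prod.fst '' ⋃ n, disjointPadding X n := by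
    rintro _ ⟨a, ha, rfl⟩
    obtain ⟨n, hn⟩ := mem_iUnion.mp ha
    exact ⟨(some a, n), mem_iUnion_of_mem n ⟨mem_insert_of_mem _ ⟨a, hn, rfl⟩, rfl⟩, rfl⟩
  calc #(⋃ n, X n) = #(some '' ⋃ n, X n) := (mk_image_eq (Option.some_injective α)).symm
    _ ≤ #(Prod.fst '' ⋃ n, disjointPadding X n) := mk_le_mk_of_subset hsub
    _ ≤ #(⋃ n, disjointPadding X n) := mk_image_le

end DisjointPadding

theorem SigmaKappaCC.mk_lt_of_isPosetAntichain {κ : Cardinal.{u}} {P : Type u} [PartialOrder P]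
    (hP : SigmaKappaCC κ P) (hU : ∀ X : ℕ → Set P, (∀ n, #(X n) < κ) → #(⋃ n, X n) < κ)
    {A : Set P} (hA : IsPosetAntichain A) : #A < κ := by
  obtain ⟨Q, hQ, hQκ⟩ := hP
  have hA_eq : A = ⋃ n, A ∩ Q n := by rw [← inter_iUnion, hQ, inter_univ]
  rw [hA_eq]
  exact hU _ fun n => hQκ n _ inter_subset_right (hA.mono inter_subset_left)

/-- Theorem 3.3 (z1), second part: if moreover `κ` has uncountable cofinality (a set of
cardinality `κ` cannot be covered by countably many sets of cardinality `< κ`), then every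
poset in the family is `κ`-cc iff countable unions of sets of size `< κ` have size `< κ`. -/
theorem sigmaKappaCC_antichain_lt_iff_countable_union_lt (κ : Cardinal.{u})
    (hcof : ∀ (β : Type u) (S : Set β) (C : ℕ → Set β),
      #S = κ → (∀ n, #(C n) < κ) → ¬ S ⊆ ⋃ n, C n)
    (ι : Type u) (P : ι → Type u) [∀ i, PartialOrder (P i)]
    (hcc : ∀ i, SigmaKappaCC κ (P i))
    (hF : ∀ (α : Type u) (X : ℕ → Set α),
      Pairwise (Function.onFun Disjoint X) → (∀ n, (X n).Nonempty) →
      (∀ n, #(X n) < κ) →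
      ∃ (i : ι) (f : (⋃ n, X n) → P i),
        Function.Injective f ∧ IsPosetAntichain (Set.range f)) :
    (∀ (i : ι) (A : Set (P i)), IsPosetAntichain A → #A < κ) ↔
    (∀ (α : Type u) (X : ℕ → Set α), (∀ n, #(X n) < κ) → #(⋃ n, X n) < κ) := by
  refine ⟨fun hA α X hX => ?_, fun hU i A hA => (hcc i).mk_lt_of_isPosetAntichain (hU _) hA⟩
  rcases le_one_or_aleph0_lt_of_forall_not_subset_iUnion hcof with hκ | hκ
  · exact mk_iUnion_lt_of_le_one hκ hX
  obtain ⟨i, f, hf, hfA⟩ := hF _ (disjointPadding X) (pairwise_disjoint_disjointPadding X)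
    (nonempty_disjointPadding X) fun n => mk_disjointPadding_lt hκ.le (hX n)
  calc #(⋃ n, X n) ≤ #(⋃ n, disjointPadding X n) := mk_iUnion_le_mk_iUnion_disjointPadding X
    _ = #(range f) := (mk_range_eq f hf).symm
    _ < κ := hA i _ hfA
end

section
/- Let Y₁, Y₂, … (indexed by n ≥ 1) be a sequence of pairwise disjoint nonempty finite subsets of a type α. Define f : α → ℂ by f(a) = 1/(|Yₙ| · n) if a ∈ Yₙ, and f(a) = 0 if a is in none of the Yₙ. Then f is square-summable, i.e., f belongs to ℓ²(α) (equivalently, ∑_{a ∈ α} |f(a)|² < ∞), and f(a) ≠ 0 for every a ∈ ⋃ₙ Yₙ. -/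
open Set

universe u

/-! The weight of `Yₙ` in `∑ₐ ‖f a‖²` is `|Yₙ| · (|Yₙ| (n+1))⁻² ≤ (n+1)⁻²`, and covering the
support of `f` by the `Yₙ` bounds the whole sum by `∑ₙ (n+1)⁻² < ∞` (a union bound, computed
in `ℝ≥0∞`). -/

theorem summable_of_support_subset_iUnion {α ι : Type*} {s : ι → Set α} {g : α → ℝ}
    (hg : 0 ≤ g) (hsupp : g.support ⊆ ⋃ i, s i) (hs : ∀ i, Summable fun a : s i => g a)
    (h : Summable fun i => ∑' a : s i, g a) : Summable g := by
  lift g to α → NNReal using hg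
  simp only [NNReal.summable_coe, ← NNReal.coe_tsum] at hs h ⊢
  rw [← ENNReal.tsum_coe_ne_top_iff_summable]
  refine ne_top_of_le_ne_top (ENNReal.tsum_coe_ne_top_iff_summable.2 h) ?_
  calc ∑' a, (g a : ENNReal) = ∑' a : ⋃ i, s i, (g a : ENNReal) :=
        (tsum_subtype_eq_of_support_subset (by simpa using hsupp)).symm
    _ ≤ ∑' i, ∑' a : s i, (g a : ENNReal) :=
        ENNReal.tsum_iUnion_le_tsum (fun a => (g a : ENNReal)) s
    _ = ∑' i, ((∑' a : s i, g a : NNReal) : ENNReal) := by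
        simp_rw [ENNReal.coe_tsum (hs _)]

theorem natCast_mul_one_div_mul_sq_le (k : ℕ) {m : ℝ} (hm : 0 < m) :
    k * (1 / (k * m)) ^ 2 ≤ 1 / m ^ 2 := by
  rcases k.eq_zero_or_pos with rfl | hk
  · simp only [Nat.cast_zero, zero_mul]
    positivity
  · have hk : (1 : ℝ) ≤ k := by exact_mod_cast hk
    rw [div_pow, mul_pow, one_pow, mul_one_div, div_le_div_iff₀ (by positivity) (by positivity)]
    nlinarith [mul_nonneg (mul_nonneg (zero_le_one.trans hk) (sq_nonneg m)) (sub_nonneg.2 hk)]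

theorem summable_one_div_nat_add_one_sq : Summable fun n : ℕ => 1 / ((n : ℝ) + 1) ^ 2 := by
  simpa using (Real.summable_one_div_nat_add_rpow 1 2).2 one_lt_two

theorem russell_socks_ell_two_general {α : Type u} (Y : ℕ → Set α)
    (hfin : ∀ n, (Y n).Finite)
    (f : α → ℂ)
    (hf : ∀ n, ∀ a ∈ Y n, f a = 1 / (((Y n).ncard : ℂ) * ((n : ℂ) + 1)))
    (hf0 : ∀ a, a ∉ ⋃ n, Y n → f a = 0) :
    Memℓp f 2 ∧ ∀ a ∈ ⋃ n, Y n, f a ≠ 0 := by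
  have hnorm : ∀ n, ∀ a ∈ Y n, ‖f a‖ = 1 / ((Y n).ncard * ((n : ℝ) + 1)) := fun n a ha => by
    rw [hf n a ha]
    norm_cast
    rw [norm_div, norm_one, Complex.norm_natCast]
  refine ⟨(memℓp_gen_iff (by norm_num)).2 ?_, fun a ha => ?_⟩
  · have hblock : ∀ n, ∑' a : Y n, ‖f a‖ ^ (2 : ENNReal).toReal ≤ 1 / ((n : ℝ) + 1) ^ 2 := by
      intro n
      simp only [ENNReal.toReal_ofNat, Real.rpow_two]
      rw [tsum_congr fun a : Y n => by rw [hnorm n a a.2], tsum_const, Nat.card_coe_set_eq,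
        nsmul_eq_mul]
      exact natCast_mul_one_div_mul_sq_le _ (by positivity)
    refine summable_of_support_subset_iUnion (fun a => by positivity) (fun a ha => ?_)
      (fun n => have := (hfin n).to_subtype; .of_finite)
      (summable_one_div_nat_add_one_sq.of_nonneg_of_le (fun n => by positivity) hblock)
    by_contra hout
    simp [hf0 a hout] at ha
  · obtain ⟨n, hn⟩ := mem_iUnion.mp ha
    have hcard : 0 < (Y n).ncard := (ncard_pos (hfin n)).2 ⟨a, hn⟩
    rw [← norm_pos_iff, hnorm n a hn]
    positivity

/-- The function assigning `1/(|Yₙ| · n)` to the elements of `Yₙ` (here `Yₙ` is the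
`(n+1)`-st set of the sequence, `n : ℕ`) and `0` elsewhere is square-summable, i.e. lies in
`ℓ²(α)`, and is nonzero at every point of `⋃ₙ Yₙ`. -/
theorem russell_socks_ell_two {α : Type u} (Y : ℕ → Set α)
    (hdisj : Pairwise (Function.onFun Disjoint Y))
    (hne : ∀ n, (Y n).Nonempty) (hfin : ∀ n, (Y n).Finite)
    (f : α → ℂ)
    (hf : ∀ n, ∀ a ∈ Y n, f a = 1 / (((Y n).ncard : ℂ) * ((n : ℂ) + 1)))
    (hf0 : ∀ a, a ∉ ⋃ n, Y n → f a = 0) :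
    Memℓp f 2 ∧ ∀ a ∈ ⋃ n, Y n, f a ≠ 0 :=
  russell_socks_ell_two_general Y hfin f hf hf0
end

section
/- Let X₁, X₂, … (indexed by n ≥ 1) be a sequence of pairwise disjoint nonempty sets, all subsets of a type α, and let 0 be a point not belonging to any Xₙ. For each n let Yₙ = Xₙ ∪ {0}, endowed with the discrete topology, and give Y = ∏ₙ Yₙ the product topology. For x ∈ Xₙ define U_x = {y ∈ Y : yᵢ = 0 for all i < n, and yₙ = x}. Then the family {U_x : x ∈ ⋃ₙ Xₙ} consists of nonempty open subsets of Y that are pairwise disjoint, and the map x ↦ U_x is injective; hence this family has the same cardinality as ⋃ₙ Xₙ. -/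
open Cardinal Set

universe u

/-- The product `Y = ∏ₙ Yₙ` where `Yₙ = Xₙ ∪ {z}`; each factor is a subspace of the
discrete space `α` (hence discrete), and the product carries the product topology. -/
abbrev SocksProd {α : Type u} (X : ℕ → Set α) (z : α) : Type u :=
  ∀ n : ℕ, ↥(insert z (X n))

/-- For `x ∈ Xₙ`, the basic open set `U_x = {y : yᵢ = z for i < n, and yₙ = x}`. -/
def SocksU {α : Type u} (X : ℕ → Set α) (z : α) (n : ℕ) (x : α) :
    Set (SocksProd X z) :=
  {y | (∀ i < n, (y i : α) = z) ∧ (y n : α) = x}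

/-!
Each `U_x` is cut out by conditions on the finitely many coordinates `0, …, n`, hence open.
If `y ∈ U_x ∩ U_w` with `x ∈ Xₙ`, `w ∈ Xₘ` and `m < n`, then `w = yₘ = z`, contradicting
`z ∉ Xₘ`; so `U_x` determines both `n` and `x`. Hence `(n, x) ↦ U_x` is a bijection from
`Σₙ Xₙ` onto the family, and `Σₙ Xₙ ≃ ⋃ₙ Xₙ` because the `Xₙ` are disjoint.
-/

variable {α : Type u} {X : ℕ → Set α} {z : α}

theorem socksU_eq_pi (n : ℕ) (x : α) :
    SocksU X z n x =
      (Iic n).pi fun i => {w : ↥(insert z (X i)) | (w : α) = if i < n then z else x} := by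
  ext y
  simp only [SocksU, mem_ofPred_eq, mem_pi, mem_Iic]
  constructor
  · rintro ⟨hlt, hn⟩ i hi
    rcases hi.lt_or_eq with hi | rfl
    · simp [hi, hlt i hi]
    · simp [hn]
  · intro h
    exact ⟨fun i hi => by simpa [hi] using h i hi.le, by simpa using h n le_rfl⟩

theorem isOpen_socksU [TopologicalSpace α] [DiscreteTopology α] (n : ℕ) (x : α) :
    IsOpen (SocksU X z n x) := by
  rw [socksU_eq_pi]
  exact isOpen_set_pi (finite_Iic n) fun _ _ => isOpen_discrete _

theorem socksU_nonempty {n : ℕ} {x : α} (hx : x ∈ X n) : (SocksU X z n x).Nonempty := by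
  refine ⟨Function.update (fun _ => ⟨z, mem_insert z _⟩) n ⟨x, mem_insert_of_mem z hx⟩,
    ?_, ?_⟩
  · intro i hi
    simp [Function.update_of_ne hi.ne]
  · simp

theorem le_of_mem_socksU_of_mem_socksU (hz : z ∉ ⋃ n, X n) {n m : ℕ} {x w : α}
    (hw : w ∈ X m) {y : SocksProd X z} (hyx : y ∈ SocksU X z n x)
    (hyw : y ∈ SocksU X z m w) : n ≤ m := by
  by_contra! hmn
  have hwz : w = z := hyw.2.symm.trans (hyx.1 m hmn)
  exact hz (mem_iUnion_of_mem m (hwz ▸ hw))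

theorem eq_and_eq_of_mem_socksU_of_mem_socksU (hz : z ∉ ⋃ n, X n) {n m : ℕ} {x w : α}
    (hx : x ∈ X n) (hw : w ∈ X m) {y : SocksProd X z} (hyx : y ∈ SocksU X z n x)
    (hyw : y ∈ SocksU X z m w) : n = m ∧ x = w := by
  obtain rfl : n = m := le_antisymm (le_of_mem_socksU_of_mem_socksU hz hw hyx hyw)
    (le_of_mem_socksU_of_mem_socksU hz hx hyw hyx)
  exact ⟨rfl, hyx.2.symm.trans hyw.2⟩

theorem disjoint_socksU (hz : z ∉ ⋃ n, X n) {n m : ℕ} {x w : α} (hx : x ∈ X n)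
    (hw : w ∈ X m) (hxw : x ≠ w) : Disjoint (SocksU X z n x) (SocksU X z m w) :=
  disjoint_left.2 fun _ hyx hyw =>
    hxw (eq_and_eq_of_mem_socksU_of_mem_socksU hz hx hw hyx hyw).2

theorem eq_and_eq_of_socksU_eq (hz : z ∉ ⋃ n, X n) {n m : ℕ} {x w : α} (hx : x ∈ X n)
    (hw : w ∈ X m) (h : SocksU X z n x = SocksU X z m w) : n = m ∧ x = w := by
  obtain ⟨y, hy⟩ := socksU_nonempty (z := z) hx
  exact eq_and_eq_of_mem_socksU_of_mem_socksU hz hx hw hy (h ▸ hy)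

theorem socksU_sigma_injective (hz : z ∉ ⋃ n, X n) :
    Function.Injective fun p : Σ n, X n => SocksU X z p.1 p.2 := by
  rintro ⟨n, x, hx⟩ ⟨m, w, hw⟩ h
  obtain ⟨rfl, rfl⟩ := eq_and_eq_of_socksU_eq hz hx hw h
  rfl

theorem range_socksU_sigma :
    range (fun p : Σ n, X n => SocksU X z p.1 p.2) =
      {S | ∃ n, ∃ x ∈ X n, S = SocksU X z n x} := by
  ext S
  simp only [mem_range, Sigma.exists, Subtype.exists, exists_prop, mem_ofPred_eq, eq_comm]

theorem socks_antichain_of_open_sets_general {α : Type u} [TopologicalSpace α] [DiscreteTopology α]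
    (X : ℕ → Set α) (hdisj : Pairwise (Function.onFun Disjoint X))
    (z : α) (hz : z ∉ ⋃ n, X n) :
    (∀ n, ∀ x ∈ X n, IsOpen (SocksU X z n x) ∧ (SocksU X z n x).Nonempty) ∧
    (∀ n m : ℕ, ∀ x ∈ X n, ∀ w ∈ X m, x ≠ w →
      Disjoint (SocksU X z n x) (SocksU X z m w)) ∧
    (∀ n m : ℕ, ∀ x ∈ X n, ∀ w ∈ X m, SocksU X z n x = SocksU X z m w → x = w) ∧
    #{S : Set (SocksProd X z) | ∃ n, ∃ x ∈ X n, S = SocksU X z n x} = #(⋃ n, X n) := by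
  refine ⟨fun n x hx => ⟨isOpen_socksU n x, socksU_nonempty hx⟩,
    fun n m x hx w hw => disjoint_socksU hz hx hw,
    fun n m x hx w hw h => (eq_and_eq_of_socksU_eq hz hx hw h).2, ?_⟩
  calc #{S : Set (SocksProd X z) | ∃ n, ∃ x ∈ X n, S = SocksU X z n x}
      = #(Σ n, X n) := by rw [← range_socksU_sigma, mk_range_eq _ (socksU_sigma_injective hz)]
    _ = #(⋃ n, X n) := mk_congr (unionEqSigmaOfDisjoint hdisj).symm

/-- Given a sequence of pairwise disjoint nonempty sets `Xₙ ⊆ α` and a point `z` in none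
of them, the sets `U_x` (for `x ∈ ⋃ₙ Xₙ`) are nonempty open subsets of the product
`∏ₙ (Xₙ ∪ {z})` of discrete spaces, pairwise disjoint, the assignment `x ↦ U_x` is
injective, and the family `{U_x : x ∈ ⋃ₙ Xₙ}` has the same cardinality as `⋃ₙ Xₙ`. -/
theorem socks_antichain_of_open_sets {α : Type u} [TopologicalSpace α] [DiscreteTopology α]
    (X : ℕ → Set α) (hdisj : Pairwise (Function.onFun Disjoint X))
    (hne : ∀ n, (X n).Nonempty) (z : α) (hz : z ∉ ⋃ n, X n) :
    (∀ n, ∀ x ∈ X n, IsOpen (SocksU X z n x) ∧ (SocksU X z n x).Nonempty) ∧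
    (∀ n m : ℕ, ∀ x ∈ X n, ∀ w ∈ X m, x ≠ w →
      Disjoint (SocksU X z n x) (SocksU X z m w)) ∧
    (∀ n m : ℕ, ∀ x ∈ X n, ∀ w ∈ X m, SocksU X z n x = SocksU X z m w → x = w) ∧
    #{S : Set (SocksProd X z) | ∃ n, ∃ x ∈ X n, S = SocksU X z n x} = #(⋃ n, X n) :=
  socks_antichain_of_open_sets_general X hdisj z hz
end
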